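/- arXiv:math/0606539 — 4 statements merged into one kernel-verified Lean document; each statement's English description precedes it below -/
import Mathlib

section
/- Let H be a hypergraph with at least two edges. An edge E of H is a splitting edge (i.e., I(H) = (x^E) + I(H\E) is an Eliahou–Kervaire splitting) if and only if there exists a vertex z ∈ E such that (x^E) ∩ I(H\E) ⊆ (x^E) ∩ I(H\{z}), where H\{z} is the sub-hypergraph of H obtained by deleting every edge containing z. -/
open Finset
open scoped Classical

noncomputable section

/-- A simple hypergraph: all edges have at least two vertices and no edge contains another. -/
structure SimpleHypergraph (V : Type*) where
  edges : Finset (Finset V)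
  card_ge : ∀ e ∈ edges, 2 ≤ e.card
  antichain : ∀ e ∈ edges, ∀ f ∈ edges, e ⊆ f → e = f

variable {V : Type*} [DecidableEq V]

/-- A chain `(E₀, x₁, E₁, …, xₙ, Eₙ)` in a hypergraph, recorded as the list of its edges;
the vertex conditions amount to `xₖ ∈ Eₖ₋₁ ∩ Eₖ`. -/
def IsHChain (H : SimpleHypergraph V) (l : List (Finset V)) : Prop :=
  l ≠ [] ∧ l.Nodup ∧ (∀ e ∈ l, e ∈ H.edges) ∧
  ∃ xs : List V, xs.Nodup ∧ xs.length + 1 = l.length ∧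
    ∀ i, (h : i < xs.length) → xs.get ⟨i, h⟩ ∈ l.getD i ∅ ∩ l.getD (i+1) ∅

/-- A proper chain: `|Eᵢ ∩ Eᵢ₊₁| = |Eᵢ₊₁| - 1` for all `i`. -/
def IsProperChain (H : SimpleHypergraph V) (l : List (Finset V)) : Prop :=
  IsHChain H l ∧ ∀ i, i + 1 < l.length →
    (l.getD i ∅ ∩ l.getD (i+1) ∅).card + 1 = (l.getD (i+1) ∅).card

/-- A proper irredundant chain: no proper subsequence with the same endpoints is a proper
chain. -/
def IsPIChain (H : SimpleHypergraph V) (l : List (Finset V)) : Prop :=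
  IsProperChain H l ∧ ∀ l' : List (Finset V), l'.Sublist l → l' ≠ l →
    l'.head? = l.head? → l'.getLast? = l.getLast? → ¬ IsProperChain H l'

/-- The distance between two edges: minimal length of a proper irredundant chain
from `E` to `F` (`∞` if there is none). -/
def edgeDist (H : SimpleHypergraph V) (E F : Finset V) : ℕ∞ :=
  sInf ((fun l : List (Finset V) => ((l.length - 1 : ℕ) : ℕ∞)) ''
    {l | IsPIChain H l ∧ l.head? = some E ∧ l.getLast? = some F})

/-- A `d`-uniform properly-connected hypergraph. -/
def UniformPC (H : SimpleHypergraph V) (d : ℕ) : Prop :=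
  (∀ e ∈ H.edges, e.card = d) ∧
  ∀ E ∈ H.edges, ∀ F ∈ H.edges, (E ∩ F).Nonempty →
    edgeDist H E F = ((d - (E ∩ F).card : ℕ) : ℕ∞)

/-- The sub-hypergraph consisting of the edges satisfying `P`. -/
def SimpleHypergraph.restrict (H : SimpleHypergraph V) (P : Finset V → Prop) :
    SimpleHypergraph V where
  edges := H.edges.filter P
  card_ge := fun e he => H.card_ge e (Finset.mem_filter.mp he).1
  antichain := fun e he f hf hef =>
    H.antichain e (Finset.mem_filter.mp he).1 f (Finset.mem_filter.mp hf).1 hef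

/-- The vertex neighbor set `N(E)` of an edge: union of `F \ E` over edges at distance 1. -/
def nbrSet (H : SimpleHypergraph V) (E : Finset V) : Finset V :=
  (H.edges.filter fun F => edgeDist H E F = 1).sup fun F => F \ E

variable (k : Type*) [Field k]

/-- The squarefree monomial attached to an edge. -/
def edgeMonomial (E : Finset V) : MvPolynomial V k := ∏ x ∈ E, MvPolynomial.X x

/-- The edge ideal of a hypergraph. -/
def edgeIdeal (H : SimpleHypergraph V) : Ideal (MvPolynomial V k) :=
  Ideal.span ((fun E => edgeMonomial k E) '' ↑H.edges)

/-- The exponent vector of the squarefree monomial attached to an edge. -/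
def mexp (E : Finset V) : V →₀ ℕ := ∑ x ∈ E, Finsupp.single x 1

/-- The minimal monomials (w.r.t. divisibility) among a finite set of monomials;
these are the minimal generators of the monomial ideal they generate. -/
def minMon (A : Finset (V →₀ ℕ)) : Finset (V →₀ ℕ) :=
  A.filter fun m => ∀ m' ∈ A, m' ≤ m → m' = m

/-- Minimal generators of `J ∩ K`, where `J`, `K` are the monomial ideals with
(minimal) monomial generators `A`, `B`: minimal elements among the pairwise lcm's. -/
def interMin (A B : Finset (V →₀ ℕ)) : Finset (V →₀ ℕ) :=
  minMon ((A ×ˢ B).image fun p => p.1 ⊔ p.2)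

/-- Eliahou–Kervaire splitting: the monomial ideal generated by `A ∪ B` is split as
the sum of the ideals generated by `A` and by `B`. -/
def IsSplitting (A B : Finset (V →₀ ℕ)) : Prop :=
  A.Nonempty ∧ B.Nonempty ∧ Disjoint A B ∧
  (∀ m ∈ A ∪ B, ∀ m' ∈ A ∪ B, m' ≤ m → m' = m) ∧
  ∃ φ ψ : (V →₀ ℕ) → (V →₀ ℕ),
    (∀ w ∈ interMin A B, φ w ∈ A ∧ ψ w ∈ B ∧ w = φ w ⊔ ψ w) ∧
    ∀ S ⊆ interMin A B, S.Nonempty → S.sup φ < S.sup id ∧ S.sup ψ < S.sup id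

/-- A splitting edge of a hypergraph: `I(H) = (x^E) + I(H \ E)` is a splitting. -/
def IsSplittingEdge (H : SimpleHypergraph V) (E : Finset V) : Prop :=
  E ∈ H.edges ∧ IsSplitting {mexp E} ((H.edges.erase E).image mexp)

variable [LinearOrder V]

/-- Total degree of a monomial. -/
def mdeg (m : V →₀ ℕ) : ℕ := m.sum fun _ e => e

/-- Basis of the degree-`j` part of the `i`-th term of the Taylor complex of the monomial
ideal generated by `G`: `i`-element subsets of `G` whose lcm has degree `j`. -/
def TaylorIndex (G : Finset (V →₀ ℕ)) (i j : ℕ) : Finset (Finset (V →₀ ℕ)) :=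
  G.powerset.filter fun S => S.card = i ∧ mdeg (S.sup id) = j

/-- Matrix of the Taylor-complex differential `T_{i+1} → T_i` reduced mod the maximal
ideal, in homological degree-`j` graded part. -/
def taylorMatrix (G : Finset (V →₀ ℕ)) (i j : ℕ) :
    Matrix (TaylorIndex G i j) (TaylorIndex G (i+1) j) k :=
  fun S' S =>
    if (S' : Finset (V →₀ ℕ)) ⊆ (S : Finset (V →₀ ℕ)) ∧
        (S' : Finset (V →₀ ℕ)).sup id = (S : Finset (V →₀ ℕ)).sup id then
      ∑ m ∈ (S : Finset (V →₀ ℕ)) \ (S' : Finset (V →₀ ℕ)),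
        (-1 : k) ^ ((S' : Finset (V →₀ ℕ)).filter fun a => toLex a < toLex m).card
    else 0

/-- The Taylor-complex differential reduced mod the maximal ideal. -/
def taylorBoundary (G : Finset (V →₀ ℕ)) (i j : ℕ) :
    ((TaylorIndex G (i+1) j) → k) →ₗ[k] ((TaylorIndex G i j) → k) :=
  Matrix.mulVecLin (taylorMatrix k G i j)

/-- The graded Betti number `β_{i,j}` of the monomial ideal generated by `G`, computed as
the dimension of the degree-`j` part of the `i`-th homology of the Taylor complex tensored
with the residue field. -/
def monomialBetti (G : Finset (V →₀ ℕ)) (i j : ℕ) : ℕ :=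
  Module.finrank k (LinearMap.ker (taylorBoundary k G i j)) -
  Module.finrank k (LinearMap.range (taylorBoundary k G (i+1) j))

/-- Castelnuovo–Mumford regularity of the monomial ideal generated by `G`. -/
def monReg (G : Finset (V →₀ ℕ)) : ℕ :=
  sSup {r | ∃ i j, monomialBetti k G i j ≠ 0 ∧ r + i = j}

/-- Projective dimension of the monomial ideal generated by `G`. -/
def monPdim (G : Finset (V →₀ ℕ)) : ℕ :=
  sSup {i | ∃ j, monomialBetti k G i j ≠ 0}

/-- Graded Betti numbers of the edge ideal of a hypergraph. -/
def edgeBetti (H : SimpleHypergraph V) (i j : ℕ) : ℕ :=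
  monomialBetti k (H.edges.image mexp) i j

/-- Regularity of the edge ideal of a hypergraph. -/
def edgeReg (H : SimpleHypergraph V) : ℕ :=
  monReg k (H.edges.image mexp)

/-!
Write `a = x^E` and `B` for the generators of `I(H ∖ E)`; in a splitting of `(a) + (B)` the map
`φ` is constant `a`, so everything rests on `ψ`. Applied to `S = G((a) ∩ (B))`, whose lcm is
`a ⊔ lcm ψ(S)`, strictness forces a variable `z` in which `lcm ψ(S)` has smaller exponent than
`a`; hence every `lcm(a, b')`, `b' ∈ B`, is divisible by some `b ∈ B` with `b z < a z`.
Conversely such a `z` lets one choose `ψ w` with small `z`-exponent, which keeps `lcm ψ(S)`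
strictly below `lcm S` for every `S`. For squarefree monomials this says `z ∈ E` and each
`E ∪ F`, `F ≠ E`, contains an edge avoiding `z`; as `(x^E) ∩ I(H ∖ E)` is generated by the
`x^(E ∪ F)`, this is the inclusion `(x^E) ∩ I(H ∖ E) ⊆ (x^E) ∩ I(H ∖ {z})`.
-/

theorem Finsupp.finset_sup_apply {ι σ : Type*} (S : Finset ι) (f : ι → σ →₀ ℕ) (x : σ) :
    S.sup f x = S.sup fun i => f i x := by
  induction S using Finset.cons_induction with
  | empty => rfl
  | cons i S _ ih => simp [ih]

section MonomialSplitting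

variable {σ : Type*} [DecidableEq σ] {a b w : σ →₀ ℕ} {B : Finset (σ →₀ ℕ)}

theorem mem_minMon_iff {A : Finset (σ →₀ ℕ)} : w ∈ minMon A ↔ Minimal (· ∈ A) w := by
  simp only [minMon, mem_filter, Minimal]
  exact and_congr_right fun _ =>
    forall₂_congr fun _ _ => ⟨fun h hle => (h hle).ge, fun h hle => le_antisymm hle (h hle)⟩

theorem sup_mem_image_singleton_product (hb : b ∈ B) :
    a ⊔ b ∈ (({a} ×ˢ B).image fun p => p.1 ⊔ p.2) := by
  simpa using ⟨b, hb, rfl⟩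

theorem exists_mem_interMin_singleton_le (hb : b ∈ B) : ∃ w ∈ interMin {a} B, w ≤ a ⊔ b := by
  obtain ⟨w, hle, hw⟩ := exists_minimal_le_of_wellFoundedLT _ _ (sup_mem_image_singleton_product hb)
  exact ⟨w, mem_minMon_iff.2 hw, hle⟩

theorem le_of_mem_interMin_singleton (hw : w ∈ interMin {a} B) : a ≤ w := by
  obtain ⟨b, -, rfl⟩ : ∃ b ∈ B, a ⊔ b = w := by simpa using (mem_minMon_iff.1 hw).prop
  exact le_sup_left

theorem eq_sup_of_mem_interMin_singleton (hw : w ∈ interMin {a} B) (hb : b ∈ B) (hbw : b ≤ w) :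
    w = a ⊔ b :=
  ((mem_minMon_iff.1 hw).eq_of_le (sup_mem_image_singleton_product hb)
    (sup_le (le_of_mem_interMin_singleton hw) hbw)).symm

theorem IsSplitting.exists_lt_of_singleton (h : IsSplitting {a} B) :
    ∃ z, ∀ b' ∈ B, ∃ b ∈ B, b ≤ a ⊔ b' ∧ b z < a z := by
  obtain ⟨-, hB, -, -, φ, ψ, hφψ, hS⟩ := h
  set S := interMin {a} B
  have hw_eq : ∀ w ∈ S, w = a ⊔ ψ w := fun w hw => by
    obtain ⟨hφw, -, hw⟩ := hφψ w hw
    rwa [mem_singleton.1 hφw] at hw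
  have hSne : S.Nonempty := by
    obtain ⟨b, hb⟩ := hB
    obtain ⟨w, hw, -⟩ := exists_mem_interMin_singleton_le (a := a) hb
    exact ⟨w, hw⟩
  have ha_not_le : ¬ a ≤ S.sup ψ := fun ha =>
    (hS S subset_rfl hSne).2.not_ge <| Finset.sup_le fun w hw => by
      rw [id, hw_eq w hw]
      exact sup_le ha (le_sup hw)
  obtain ⟨z, hz⟩ : ∃ z, (S.sup ψ) z < a z := by simpa [Finsupp.le_def] using ha_not_le
  refine ⟨z, fun b' hb' => ?_⟩
  obtain ⟨w, hw, hwb'⟩ := exists_mem_interMin_singleton_le (a := a) hb'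
  refine ⟨ψ w, (hφψ w hw).2.1, ?_, (le_sup (f := ψ) hw z).trans_lt hz⟩
  calc ψ w ≤ a ⊔ ψ w := le_sup_right
    _ = w := (hw_eq w hw).symm
    _ ≤ a ⊔ b' := hwb'

theorem isSplitting_singleton_of_lt (hB : B.Nonempty) (ha : a ∉ B)
    (hanti : ∀ m ∈ {a} ∪ B, ∀ m' ∈ {a} ∪ B, m' ≤ m → m' = m) (z : σ)
    (hz : ∀ b' ∈ B, ∃ b ∈ B, b ≤ a ⊔ b' ∧ b z < a z) : IsSplitting {a} B := by
  let ψ w := if h : ∃ b ∈ B, b ≤ w ∧ b z < a z then h.choose else 0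
  have hψ : ∀ w ∈ interMin {a} B, ψ w ∈ B ∧ ψ w ≤ w ∧ ψ w z < a z := fun w hw => by
    obtain ⟨b', hb', rfl⟩ : ∃ b' ∈ B, a ⊔ b' = w := by simpa using (mem_minMon_iff.1 hw).prop
    have h := hz b' hb'
    simpa only [ψ, dif_pos h] using h.choose_spec
  have hw_eq : ∀ w ∈ interMin {a} B, w = a ⊔ ψ w := fun w hw =>
    eq_sup_of_mem_interMin_singleton hw (hψ w hw).1 (hψ w hw).2.1
  have ha_lt : ∀ w ∈ interMin {a} B, a < w := fun w hw => by
    refine (le_of_mem_interMin_singleton hw).lt_of_ne fun haw => ha ?_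
    have hψa : ψ w ≤ a := haw ▸ (hψ w hw).2.1
    simpa [hanti a (by simp) (ψ w) (by simp [(hψ w hw).1]) hψa] using (hψ w hw).1
  refine ⟨singleton_nonempty a, hB, disjoint_singleton_left.2 ha, hanti, fun _ => a, ψ,
    fun w hw => ⟨mem_singleton_self a, (hψ w hw).1, hw_eq w hw⟩, fun S hS hSne => ⟨?_, ?_⟩⟩
  · obtain ⟨w, hw⟩ := hSne
    rw [sup_const ⟨w, hw⟩]
    exact (ha_lt w (hS hw)).trans_le (le_sup (f := id) hw)
  · refine (Finset.sup_mono_fun fun w hw => (hψ w (hS hw)).2.1).lt_of_ne fun h => ?_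
    obtain ⟨w, hw⟩ := hSne
    have hψz : S.sup ψ z < a z := by
      rw [Finsupp.finset_sup_apply, Finset.sup_lt_iff (pos_of_gt (hψ w (hS hw)).2.2)]
      exact fun w' hw' => (hψ w' (hS hw')).2.2
    have haψ : a ≤ S.sup ψ := h ▸ (ha_lt w (hS hw)).le.trans (le_sup (f := id) hw)
    exact (hψz.trans_le (haψ z)).false

theorem isSplitting_singleton_iff (hB : B.Nonempty) (ha : a ∉ B)
    (hanti : ∀ m ∈ {a} ∪ B, ∀ m' ∈ {a} ∪ B, m' ≤ m → m' = m) :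
    IsSplitting {a} B ↔ ∃ z, ∀ b' ∈ B, ∃ b ∈ B, b ≤ a ⊔ b' ∧ b z < a z :=
  ⟨IsSplitting.exists_lt_of_singleton, fun ⟨z, hz⟩ => isSplitting_singleton_of_lt hB ha hanti z hz⟩

end MonomialSplitting

theorem MvPolynomial.span_monomial_inf_le_span_monomial_inf_iff {σ R : Type*} [CommSemiring R]
    [Nontrivial R] {a : σ →₀ ℕ} {B C : Set (σ →₀ ℕ)} :
    Ideal.span {monomial a (1 : R)} ⊓ Ideal.span ((monomial · 1) '' B) ≤
        Ideal.span {monomial a (1 : R)} ⊓ Ideal.span ((monomial · 1) '' C) ↔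
      ∀ b ∈ B, ∃ c ∈ C, c ≤ a ⊔ b := by
  simp only [← Set.image_singleton (f := (monomial · (1 : R))), SetLike.le_def, Ideal.mem_inf,
    mem_ideal_span_monomial_image, Set.mem_singleton_iff, exists_eq_left]
  constructor
  · intro h b hb
    have hsupp : (monomial (a ⊔ b) (1 : R)).support = {a ⊔ b} := by
      rw [support_monomial, if_neg one_ne_zero]
    have h := h (x := monomial (a ⊔ b) 1)
    simp only [hsupp, Finset.mem_singleton, forall_eq] at h
    exact (h ⟨le_sup_left, b, hb, le_sup_right⟩).2
  · rintro h p ⟨hpa, hpB⟩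
    refine ⟨hpa, fun m hm => ?_⟩
    obtain ⟨b, hb, hbm⟩ := hpB m hm
    obtain ⟨c, hc, hcab⟩ := h b hb
    exact ⟨c, hc, hcab.trans (sup_le (hpa m hm) hbm)⟩

section EdgeIdeal

variable {σ : Type*} {E F : Finset σ}

theorem mexp_apply (E : Finset σ) (x : σ) : mexp E x = if x ∈ E then 1 else 0 := by
  simp [mexp, Finsupp.single_apply]

theorem mexp_le_mexp : mexp E ≤ mexp F ↔ E ⊆ F := by
  refine ⟨fun h x hx => ?_, fun h x => ?_⟩
  · simpa [mexp_apply, hx, Nat.one_le_iff_ne_zero] using h x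
  · by_cases hx : x ∈ E
    · simp [mexp_apply, hx, h hx]
    · simp [mexp_apply, hx]

theorem mexp_injective : Function.Injective (mexp : Finset σ → σ →₀ ℕ) := fun _ _ h =>
  (mexp_le_mexp.1 h.le).antisymm (mexp_le_mexp.1 h.ge)

theorem mexp_apply_lt_mexp_apply {x : σ} : mexp F x < mexp E x ↔ x ∈ E ∧ x ∉ F := by
  by_cases hE : x ∈ E <;> by_cases hF : x ∈ F <;> simp [mexp_apply, hE, hF]

theorem edgeMonomial_eq_monomial (k : Type*) [Field k] (E : Finset σ) :
    edgeMonomial k E = MvPolynomial.monomial (mexp E) 1 := by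
  simp [edgeMonomial, mexp, MvPolynomial.monomial_sum_one, MvPolynomial.X]

theorem edgeIdeal_eq_span_monomial (k : Type*) [Field k] (H : SimpleHypergraph σ) :
    edgeIdeal k H = Ideal.span ((MvPolynomial.monomial · 1) '' (mexp '' H.edges)) := by
  simp_rw [edgeIdeal, Set.image_image, edgeMonomial_eq_monomial]

variable [DecidableEq σ]

theorem mexp_sup_mexp : mexp E ⊔ mexp F = mexp (E ∪ F) := by
  ext x
  by_cases hE : x ∈ E <;> by_cases hF : x ∈ F <;> simp [mexp_apply, hE, hF]

theorem SimpleHypergraph.span_edgeMonomial_inf_edgeIdeal_restrict_le_iff (k : Type*) [Field k]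
    (H : SimpleHypergraph σ) (E : Finset σ) (P Q : Finset σ → Prop) :
    Ideal.span {edgeMonomial k E} ⊓ edgeIdeal k (H.restrict P) ≤
        Ideal.span {edgeMonomial k E} ⊓ edgeIdeal k (H.restrict Q) ↔
      ∀ F ∈ H.edges, P F → ∃ F' ∈ H.edges, Q F' ∧ F' ⊆ E ∪ F := by
  rw [edgeIdeal_eq_span_monomial, edgeIdeal_eq_span_monomial, edgeMonomial_eq_monomial,
    MvPolynomial.span_monomial_inf_le_span_monomial_inf_iff]
  simp only [SimpleHypergraph.restrict, coe_filter, Set.forall_mem_image, Set.exists_mem_image,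
    Set.mem_ofPred_eq, mexp_sup_mexp, mexp_le_mexp, and_imp, and_assoc]

theorem SimpleHypergraph.image_mexp_antichain (H : SimpleHypergraph σ) :
    ∀ m ∈ H.edges.image mexp, ∀ m' ∈ H.edges.image mexp, m' ≤ m → m' = m := by
  simp only [forall_mem_image, mexp_le_mexp, mexp_injective.eq_iff]
  exact fun F hF F' hF' h => H.antichain F' hF' F hF h

theorem SimpleHypergraph.isSplittingEdge_iff (H : SimpleHypergraph σ)
    (h2 : 2 ≤ H.edges.card) {E : Finset σ} (hE : E ∈ H.edges) :
    IsSplittingEdge H E ↔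
      ∃ z ∈ E, ∀ F ∈ H.edges, F ≠ E → ∃ F' ∈ H.edges, z ∉ F' ∧ F' ⊆ E ∪ F := by
  have hErase : (H.edges.erase E).Nonempty :=
    (erase_nonempty hE).2 (one_lt_card_iff_nontrivial.1 h2)
  have hE_notMem : mexp E ∉ (H.edges.erase E).image mexp := by
    simp [mexp_injective.eq_iff]
  have hgens : {mexp E} ∪ (H.edges.erase E).image mexp = H.edges.image mexp := by
    rw [← image_singleton, ← image_union, ← insert_eq, insert_erase hE]
  rw [IsSplittingEdge, and_iff_right hE,
    isSplitting_singleton_iff (hErase.image _) hE_notMem (hgens ▸ H.image_mexp_antichain)]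
  simp only [forall_mem_image, exists_mem_image, mem_erase, mexp_sup_mexp, mexp_le_mexp,
    mexp_apply_lt_mexp_apply, and_imp]
  refine exists_congr fun z => ⟨fun h => ?_, fun ⟨hz, h⟩ F hFE hF => ?_⟩
  · obtain ⟨F₀, hF₀⟩ := hErase
    obtain ⟨hF₀E, hF₀⟩ := mem_erase.1 hF₀
    obtain ⟨-, -, -, hz, -⟩ := h hF₀E hF₀
    refine ⟨hz, fun F hF hFE => ?_⟩
    obtain ⟨F', ⟨-, hF'⟩, hF'sub, -, hzF'⟩ := h hFE hF
    exact ⟨F', hF', hzF', hF'sub⟩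
  · obtain ⟨F', hF', hzF', hF'sub⟩ := h F hF hFE
    exact ⟨F', ⟨fun hF'E => hzF' (hF'E ▸ hz), hF'⟩, hF'sub, hz, hzF'⟩

end EdgeIdeal

theorem splittingEdge_iff (k : Type*) [Field k] {V : Type*} [DecidableEq V]
    (H : SimpleHypergraph V) (h2 : 2 ≤ H.edges.card) (E : Finset V) (hE : E ∈ H.edges) :
    IsSplittingEdge H E ↔ ∃ z ∈ E,
      Ideal.span {edgeMonomial k E} ⊓ edgeIdeal k (H.restrict (· ≠ E)) ≤
      Ideal.span {edgeMonomial k E} ⊓ edgeIdeal k (H.restrict fun F => z ∉ F) := by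
  rw [H.isSplittingEdge_iff h2 hE]
  simp_rw [H.span_edgeMonomial_inf_edgeIdeal_restrict_le_iff k]
end
end

section
/- Every f-leaf of a simple hypergraph is a v-leaf: if E is an edge such that either E is the only edge of H, or there exists an edge G ≠ E with E ∩ E' ⊆ E ∩ G for all edges E' ≠ E, then E contains a vertex belonging to no other edge of H. -/
open Finset
open scoped Classical

noncomputable section

variable {V : Type*} [DecidableEq V]

variable (k : Type*) [Field k]

variable [LinearOrder V]

theorem vleaf_of_fleaf {V : Type*} [DecidableEq V]
    (H : SimpleHypergraph V) (E : Finset V) (hE : E ∈ H.edges)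
    (hfleaf : H.edges = {E} ∨ ∃ G ∈ H.edges, G ≠ E ∧
      ∀ E' ∈ H.edges, E' ≠ E → E ∩ E' ⊆ E ∩ G) :
    ∃ v ∈ E, ∀ F ∈ H.edges, F ≠ E → v ∉ F := by
  rcases hfleaf with h1 | ⟨G, hG, hGE, hsub⟩
  · obtain ⟨v, hv⟩ := Finset.card_pos.mp (by linarith [H.card_ge E hE])
    exact ⟨v, hv, fun F hF hFE => absurd (h1 ▸ hF) (by simpa using hFE)⟩
  · have hne : ¬ E ⊆ G := fun h => hGE (H.antichain E hE G hG h).symm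
    obtain ⟨v, hvE, hvG⟩ := Finset.not_subset.mp hne
    refine ⟨v, hvE, fun F hF hFE hvF => ?_⟩
    exact hvG (Finset.mem_inter.mp (hsub F hF hFE (Finset.mem_inter.mpr ⟨hvE, hvF⟩))).2

end
end

section
/- Let H be a d-uniform properly-connected hypergraph. If an edge E of H is a v-leaf (contains a free vertex), then E is an f-leaf. -/
/-! If some other edge `F` meets `E`, proper connectivity makes `edgeDist H E F` finite, so a
proper chain runs from `E` to `F`. Its second edge `G` has the same size `d` as `E` and shares
`d - 1` vertices with it, but misses the free vertex `v`; hence `E ∩ G = E \ {v}`, which contains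
`E ∩ E'` for every edge `E' ≠ E` because no such edge contains `v`. If no other edge meets `E`,
any other edge serves as `G`. -/

open Finset
open scoped Classical

noncomputable section

variable {V : Type*} [DecidableEq V]

variable (k : Type*) [Field k]

variable [LinearOrder V]

section

variable {α : Type*} [DecidableEq α] {H : SimpleHypergraph α} {E F : Finset α}

theorem Finset.inter_eq_erase_of_card_inter_add_one {s t : Finset α} {v : α} (hvs : v ∈ s)
    (hvt : v ∉ t) (hst : s.card = t.card) (hinter : (s ∩ t).card + 1 = t.card) :
    s ∩ t = s.erase v := by
  refine Finset.eq_of_subset_of_card_le (fun x hx => ?_) ?_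
  · rw [mem_inter] at hx
    exact mem_erase.mpr ⟨fun hxv => hvt (hxv ▸ hx.2), hx.1⟩
  · rw [card_erase_of_mem hvs]
    omega

theorem exists_isPIChain_of_edgeDist_ne_top (h : edgeDist H E F ≠ ⊤) :
    ∃ l, IsPIChain H l ∧ l.head? = some E ∧ l.getLast? = some F := by
  by_contra! hno
  have hempty : {l | IsPIChain H l ∧ l.head? = some E ∧ l.getLast? = some F} = ∅ :=
    Set.eq_empty_of_forall_notMem fun l hl => hno l hl.1 hl.2.1 hl.2.2
  exact h (by rw [edgeDist, hempty, Set.image_empty, sInf_empty])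

theorem IsProperChain.exists_step_of_head_ne_getLast {l : List (Finset α)}
    (hl : IsProperChain H l) (hhead : l.head? = some E) (hlast : l.getLast? = some F)
    (hEF : E ≠ F) : ∃ G ∈ H.edges, G ≠ E ∧ (E ∩ G).card + 1 = G.card := by
  obtain ⟨⟨-, hnodup, hmem, -⟩, hproper⟩ := hl
  match l, hhead with
  | [_], rfl => exact absurd (Option.some_injective _ hlast) hEF
  | _ :: G :: _, rfl =>
    refine ⟨G, hmem G (by simp), fun hGE => ?_, hproper 0 (by simp)⟩
    simp [hGE] at hnodup

theorem UniformPC.edgeDist_ne_top {d : ℕ} (hpc : UniformPC H d) (hE : E ∈ H.edges)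
    (hF : F ∈ H.edges) (hEF : (E ∩ F).Nonempty) : edgeDist H E F ≠ ⊤ := by
  rw [hpc.2 E hE F hF hEF]
  exact ENat.natCast_ne_top _

theorem UniformPC.exists_inter_eq_erase_of_free {d : ℕ} (hpc : UniformPC H d)
    (hE : E ∈ H.edges) {v : α} (hvE : v ∈ E) (hv : ∀ F ∈ H.edges, F ≠ E → v ∉ F)
    (hF : F ∈ H.edges) (hFE : F ≠ E) (hEF : (E ∩ F).Nonempty) :
    ∃ G ∈ H.edges, G ≠ E ∧ E ∩ G = E.erase v := by
  obtain ⟨l, hl, hhead, hlast⟩ :=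
    exists_isPIChain_of_edgeDist_ne_top (hpc.edgeDist_ne_top hE hF hEF)
  obtain ⟨G, hG, hGE, hstep⟩ :=
    hl.1.exists_step_of_head_ne_getLast hhead hlast hFE.symm
  refine ⟨G, hG, hGE, ?_⟩
  exact Finset.inter_eq_erase_of_card_inter_add_one hvE (hv G hG hGE)
    ((hpc.1 E hE).trans (hpc.1 G hG).symm) hstep

end

theorem fleaf_of_vleaf_uniformPC {V : Type*} [DecidableEq V]
    (H : SimpleHypergraph V) (d : ℕ) (hpc : UniformPC H d)
    (E : Finset V) (hE : E ∈ H.edges)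
    (hvleaf : ∃ v ∈ E, ∀ F ∈ H.edges, F ≠ E → v ∉ F) :
    H.edges = {E} ∨ ∃ G ∈ H.edges, G ≠ E ∧
      ∀ E' ∈ H.edges, E' ≠ E → E ∩ E' ⊆ E ∩ G := by
  obtain ⟨v, hvE, hv⟩ := hvleaf
  by_cases hmeet : ∃ F ∈ H.edges, F ≠ E ∧ (E ∩ F).Nonempty
  · obtain ⟨F, hF, hFE, hEF⟩ := hmeet
    obtain ⟨G, hG, hGE, hEG⟩ := hpc.exists_inter_eq_erase_of_free hE hvE hv hF hFE hEF
    refine Or.inr ⟨G, hG, hGE, fun E' hE' hE'E => ?_⟩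
    rw [hEG, subset_erase]
    exact ⟨inter_subset_left, fun hv' => hv E' hE' hE'E (mem_inter.mp hv').2⟩
  · push Not at hmeet
    rw [or_iff_not_imp_left, eq_singleton_iff_unique_mem]
    intro hsingle
    push Not at hsingle
    obtain ⟨G, hG, hGE⟩ := hsingle hE
    exact ⟨G, hG, hGE, fun E' hE' hE'E => by simp [hmeet E' hE' hE'E]⟩

end
end

section
/- Let H be a d-uniform properly-connected hypergraph and let E = {x_1,...,x_d} and E' be edges with dist_H(E, E') = t ≤ d. Then, after relabeling the vertices of E, there exists a proper irredundant chain E_0 = E, E_1, ..., E_t = E' such that E_i = {y_1,...,y_i, x_{i+1},...,x_d} for each i, and y_i ∉ E_j for all j < i. -/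
open Finset
open scoped Classical

noncomputable section

variable {V : Type*} [DecidableEq V]

variable (k : Type*) [Field k]

variable [LinearOrder V]

/-!
Along a proper chain of `d`-sets every step swaps one vertex `z i` for a new vertex `y i`,
so at most one vertex of `E` is lost per step. Proper connectivity gives `|E ∩ E'| = d - t`,
so along a chain of length `t` exactly one vertex of `E` is lost at every step: each `z i`
lies in `E` and each `y i` outside it. Listing `E` as `z 0, …, z (t - 1)` followed by the
vertices of `E ∩ E'` gives the required labelling.
-/

theorem Nat.le_add_sub_of_forall_le_succ_add_one {g : ℕ → ℕ} {t : ℕ}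
    (h : ∀ i < t, g i ≤ g (i + 1) + 1) {i j : ℕ} (hij : i ≤ j) (hj : j ≤ t) :
    g i ≤ g j + (j - i) := by
  induction j, hij using Nat.le_induction with
  | base => simp
  | succ j hij ih =>
    have := h j (by omega)
    have := ih (by omega)
    omega

namespace Finset

variable {α : Type*} [DecidableEq α]

theorem exists_eq_insert_erase_of_card_inter_add_one {F G : Finset α} (hcard : #F = #G)
    (h : #(F ∩ G) + 1 = #G) : ∃ z ∈ F, ∃ y ∉ F, G = insert y (F.erase z) := by
  obtain ⟨y, hy⟩ : ∃ y, G \ F = {y} := card_eq_one.mp (by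
    have := card_sdiff_add_card_inter G F
    rw [inter_comm] at this
    omega)
  obtain ⟨z, hz⟩ : ∃ z, F \ G = {z} := card_eq_one.mp (by
    have := card_sdiff_add_card_inter F G
    omega)
  have hy' : ∀ v, v ∈ G ∧ v ∉ F ↔ v = y := by simpa [Finset.ext_iff] using hy
  have hz' : ∀ v, v ∈ F ∧ v ∉ G ↔ v = z := by simpa [Finset.ext_iff] using hz
  refine ⟨z, ((hz' z).mpr rfl).1, y, ((hy' y).mpr rfl).2, ?_⟩
  ext v
  simp only [mem_insert, mem_erase]
  grind

theorem card_inter_le_card_inter_insert_erase_add_one (E F : Finset α) (y z : α) :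
    #(E ∩ F) ≤ #(E ∩ insert y (F.erase z)) + 1 := by
  calc #(E ∩ F) ≤ #(insert z (E ∩ insert y (F.erase z))) := card_le_card (by
          intro v; simp only [mem_inter, mem_insert, mem_erase]; tauto)
    _ ≤ _ := card_insert_le _ _

theorem mem_inter_and_notMem_of_card_inter_insert_erase_add_one {E F : Finset α} {y z : α}
    (hy : y ∉ F) (h : #(E ∩ insert y (F.erase z)) + 1 = #(E ∩ F)) :
    z ∈ E ∩ F ∧ y ∉ E := by
  constructor
  · by_contra hzEF
    have : E ∩ F ⊆ E ∩ insert y (F.erase z) := by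
      intro v; simp only [mem_inter, mem_insert, mem_erase]; grind
    have := card_le_card this
    omega
  · intro hyE
    have hsub : insert y ((E ∩ F).erase z) ⊆ E ∩ insert y (F.erase z) := by
      intro v; simp only [mem_inter, mem_insert, mem_erase]; grind
    have := card_le_card hsub
    rw [card_insert_of_notMem (fun h => hy (mem_inter.mp (mem_of_mem_erase h)).2)] at this
    have := pred_card_le_card_erase (s := E ∩ F) (a := z)
    omega

theorem exists_image_Ico_eq (s : Finset α) (a : ℕ) (g : ℕ → α) :
    ∃ x : ℕ → α, (∀ i < a, x i = g i) ∧ (Ico a (a + #s)).image x = s := by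
  let e := s.equivFin
  refine ⟨fun i => if h : a ≤ i ∧ i - a < #s then e.symm ⟨i - a, h.2⟩ else g i,
    fun i hi => dif_neg (by omega), ?_⟩
  ext v
  simp only [mem_image, mem_Ico]
  constructor
  · rintro ⟨i, hi, rfl⟩
    simp only [dif_pos (show a ≤ i ∧ i - a < #s by omega), coe_mem]
  · intro hv
    refine ⟨a + e ⟨v, hv⟩, by omega, ?_⟩
    simp

theorem image_filter_val_lt {n i : ℕ} (g : ℕ → α) (hi : i ≤ n) :
    (univ.filter fun a : Fin n => (a : ℕ) < i).image (fun a : Fin n => g a) =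
      (range i).image g := by
  ext v
  simp only [mem_image, mem_filter, mem_univ, true_and, mem_range]
  exact ⟨fun ⟨a, ha, hv⟩ => ⟨a, ha, hv⟩, fun ⟨a, ha, hv⟩ => ⟨⟨a, by omega⟩, ha, hv⟩⟩

theorem image_filter_le_val {n i : ℕ} (g : ℕ → α) :
    (univ.filter fun a : Fin n => i ≤ (a : ℕ)).image (fun a : Fin n => g a) =
      (Ico i n).image g := by
  ext v
  simp only [mem_image, mem_filter, mem_univ, true_and, mem_Ico]
  exact ⟨fun ⟨a, ha, hv⟩ => ⟨a, ⟨ha, a.isLt⟩, hv⟩, fun ⟨a, ha, hv⟩ => ⟨⟨a, ha.2⟩, ha.1, hv⟩⟩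

end Finset

def IsSwapSequence {α : Type*} [DecidableEq α] (f : ℕ → Finset α) (y z : ℕ → α) (t : ℕ) :
    Prop :=
  ∀ i < t, y i ∉ f i ∧ f (i + 1) = insert (y i) ((f i).erase (z i))

namespace IsSwapSequence

variable {α : Type*} [DecidableEq α] {f : ℕ → Finset α} {y z : ℕ → α} {t : ℕ}

theorem card_inter_add_eq (hs : IsSwapSequence f y z t) (hend : #(f 0 ∩ f t) + t ≤ #(f 0))
    {i : ℕ} (hi : i ≤ t) : #(f 0 ∩ f i) + i = #(f 0) := by
  have hstep : ∀ j < t, #(f 0 ∩ f j) ≤ #(f 0 ∩ f (j + 1)) + 1 := fun j hj => by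
    rw [(hs j hj).2]
    exact card_inter_le_card_inter_insert_erase_add_one _ _ _ _
  have h0i := Nat.le_add_sub_of_forall_le_succ_add_one hstep (Nat.zero_le i) hi
  have hit := Nat.le_add_sub_of_forall_le_succ_add_one hstep hi le_rfl
  rw [inter_self] at h0i
  omega

theorem mem_inter_and_notMem (hs : IsSwapSequence f y z t)
    (hend : #(f 0 ∩ f t) + t ≤ #(f 0)) {i : ℕ} (hi : i < t) : z i ∈ f 0 ∩ f i ∧ y i ∉ f 0 := by
  have h := hs.card_inter_add_eq hend (i := i + 1) hi
  rw [(hs i hi).2] at h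
  refine mem_inter_and_notMem_of_card_inter_insert_erase_add_one (hs i hi).1 ?_
  have := hs.card_inter_add_eq hend hi.le
  omega

theorem sdiff_eq_image_range (hs : IsSwapSequence f y z t)
    (hend : #(f 0 ∩ f t) + t ≤ #(f 0)) {i : ℕ} (hi : i ≤ t) : f i \ f 0 = (range i).image y := by
  induction i with
  | zero => simp
  | succ i ih =>
    obtain ⟨hz, hy⟩ := hs.mem_inter_and_notMem hend hi
    rw [(hs i hi).2, range_add_one, image_insert, ← ih (by omega), insert_sdiff_of_notMem _ hy,
      erase_sdiff_comm, erase_eq_of_notMem (fun h => (mem_sdiff.mp h).2 (mem_inter.mp hz).1)]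

theorem inter_eq_image_Ico (hs : IsSwapSequence f y z t)
    (hend : #(f 0 ∩ f t) + t ≤ #(f 0)) {x : ℕ → α} (hx : ∀ i < t, x i = z i)
    (hxt : (Ico t #(f 0)).image x = f 0 ∩ f t) {i : ℕ} (hi : i ≤ t) :
    f 0 ∩ f i = (Ico i #(f 0)).image x := by
  induction hi using Nat.decreasingInduction with
  | self => exact hxt.symm
  | of_succ i hi ih =>
    have hz := (hs.mem_inter_and_notMem hend hi).1
    have hid : i < #(f 0) := by
      have := hs.card_inter_add_eq hend le_rfl
      omega
    rw [← insert_Ico_add_one_left_eq_Ico hid, image_insert, ← ih, hx i hi, (hs i hi).2,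
      inter_insert_of_notMem (hs.mem_inter_and_notMem hend hi).2, inter_erase, insert_erase hz]

theorem exists_labeling (hs : IsSwapSequence f y z t) (hend : #(f 0 ∩ f t) + t ≤ #(f 0))
    {d : ℕ} (hd : #(f 0) = d) :
    ∃ x : Fin d → α, Function.Injective x ∧ univ.image x = f 0 ∧
      (∀ i ≤ t, f i = (univ.filter fun a : Fin t => (a : ℕ) < i).image (fun a : Fin t => y a) ∪
        (univ.filter fun a : Fin d => i ≤ (a : ℕ)).image x) ∧
      ∀ a : Fin t, ∀ j ≤ (a : ℕ), y a ∉ f j := by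
  subst hd
  obtain ⟨x, hx, hxt⟩ := exists_image_Ico_eq (f 0 ∩ f t) t z
  rw [show t + #(f 0 ∩ f t) = #(f 0) by have := hs.card_inter_add_eq hend le_rfl; omega] at hxt
  have hI := fun i (hi : i ≤ t) => hs.inter_eq_image_Ico hend hx hxt hi
  have hD := fun i (hi : i ≤ t) => hs.sdiff_eq_image_range hend hi
  have himage : univ.image (fun a : Fin #(f 0) => x a) = f 0 := by
    have := image_filter_le_val (n := #(f 0)) (i := 0) x
    simp only [zero_le, filter_true] at this
    rw [this, ← hI 0 (Nat.zero_le _), inter_self]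
  refine ⟨fun a => x a, ?_, himage, fun i hi => ?_, fun a j hj hya => ?_⟩
  · have := (card_image_iff (s := univ)).mp (by rw [himage, card_univ, Fintype.card_fin])
    rwa [coe_univ, Set.injOn_univ] at this
  · rw [image_filter_val_lt y hi, image_filter_le_val, ← hD i hi, ← hI i hi, inter_comm,
      sdiff_union_inter]
  · have hnew : y a ∈ f j \ f 0 := mem_sdiff.mpr ⟨hya, (hs.mem_inter_and_notMem hend a.isLt).2⟩
    rw [hD j (by omega)] at hnew
    have hold : y a ∈ f a \ f 0 :=
      hD a a.isLt.le ▸ image_subset_image (range_subset_range.mpr hj) hnew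
    exact (hs a a.isLt).1 (mem_sdiff.mp hold).1

end IsSwapSequence

section Hypergraph

variable {V : Type*} [DecidableEq V] {H : SimpleHypergraph V}

theorem exists_isPIChain_of_edgeDist_eq {E F : Finset V} {t : ℕ}
    (hdist : edgeDist H E F = t) :
    ∃ l, IsPIChain H l ∧ l.head? = some E ∧ l.getLast? = some F ∧ l.length = t + 1 := by
  unfold edgeDist at hdist
  have hne : ((fun l : List (Finset V) => ((l.length - 1 : ℕ) : ℕ∞)) ''
      {l | IsPIChain H l ∧ l.head? = some E ∧ l.getLast? = some F}).Nonempty :=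
    Set.nonempty_iff_ne_empty.mpr fun h => by
      rw [h, sInf_empty] at hdist
      exact ENat.natCast_ne_top t hdist.symm
  obtain ⟨l, ⟨hl, hhead, hlast⟩, hlen⟩ := hdist ▸ csInf_mem hne
  have := List.length_pos_iff.mpr hl.1.1.1
  exact ⟨l, hl, hhead, hlast, by have := Nat.cast_inj.mp hlen; omega⟩

theorem IsHChain.getD_mem_edges {l : List (Finset V)} (hl : IsHChain H l) {i : ℕ}
    (hi : i < l.length) : l.getD i ∅ ∈ H.edges := by
  rw [List.getD_eq_getElem _ _ hi]
  exact hl.2.2.1 _ (List.getElem_mem hi)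

theorem IsProperChain.isSwapSequence {l : List (Finset V)} {d : ℕ} (hl : IsProperChain H l)
    (huniform : ∀ e ∈ H.edges, #e = d) :
    ∃ y z, IsSwapSequence (l.getD · ∅) y z (l.length - 1) := by
  have hswap (i : ℕ) (hi : i < l.length - 1) :=
    exists_eq_insert_erase_of_card_inter_add_one
      (by rw [huniform _ (hl.1.getD_mem_edges (i := i) (by omega)),
        huniform _ (hl.1.getD_mem_edges (i := i + 1) (by omega))])
      (hl.2 i (by omega))
  obtain ⟨v, -⟩ : (l.getD 0 ∅).Nonempty := card_pos.mp <| by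
    have := H.card_ge _ (hl.1.getD_mem_edges (List.length_pos_iff.mpr hl.1.1))
    omega
  have : Nonempty V := ⟨v⟩
  choose! z _ y hy hstep using hswap
  exact ⟨y, z, fun i hi => ⟨hy i hi, hstep i hi⟩⟩

theorem card_inter_add_le_of_edgeDist_eq {d t : ℕ} (hpc : UniformPC H d) {E F : Finset V}
    (hE : E ∈ H.edges) (hF : F ∈ H.edges) (hdist : edgeDist H E F = t) (htd : t ≤ d) :
    #(E ∩ F) + t ≤ d := by
  rcases (E ∩ F).eq_empty_or_nonempty with hEF | hEF
  · simpa [hEF] using htd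
  · have h := hpc.2 E hE F hF hEF
    rw [hdist, Nat.cast_inj] at h
    have := card_le_card (inter_subset_left (s₁ := E) (s₂ := F))
    rw [hpc.1 E hE] at this
    omega

end Hypergraph

theorem proper_chain_structure_general {V : Type*} [DecidableEq V]
    (H : SimpleHypergraph V) (d t : ℕ) (hpc : UniformPC H d)
    (E E' : Finset V)
    (hdist : edgeDist H E E' = (t : ℕ∞)) (htd : t ≤ d) :
    ∃ (x : Fin d → V) (y : Fin t → V) (l : List (Finset V)),
      Function.Injective x ∧ Finset.univ.image x = E ∧
      IsPIChain H l ∧ l.length = t + 1 ∧ l.head? = some E ∧ l.getLast? = some E' ∧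
      (∀ i : ℕ, i ≤ t → l.getD i ∅ =
        ((Finset.univ.filter fun a : Fin t => (a : ℕ) < i).image y) ∪
        ((Finset.univ.filter fun a : Fin d => i ≤ (a : ℕ)).image x)) ∧
      ∀ i : Fin t, ∀ j : ℕ, j ≤ (i : ℕ) → y i ∉ l.getD j ∅ := by
  obtain ⟨l, hl, hhead, hlast, hlen⟩ := exists_isPIChain_of_edgeDist_eq hdist
  obtain ⟨y, z, hs⟩ := hl.1.isSwapSequence hpc.1
  rw [hlen, Nat.add_sub_cancel] at hs
  have h0 : l.getD 0 ∅ = E := by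
    cases l <;> simp_all
  have ht : l.getD t ∅ = E' := by
    rw [List.getLast?_eq_getElem?, hlen, Nat.add_sub_cancel] at hlast
    simp [List.getD_eq_getElem?_getD, hlast]
  have hE : E ∈ H.edges := h0 ▸ hl.1.1.getD_mem_edges (by omega)
  have hE' : E' ∈ H.edges := ht ▸ hl.1.1.getD_mem_edges (by omega)
  obtain ⟨x, hx, hxE, hchain, hnew⟩ := hs.exists_labeling
    (by rw [h0, ht, hpc.1 E hE]; exact card_inter_add_le_of_edgeDist_eq hpc hE hE' hdist htd)
    (h0 ▸ hpc.1 E hE)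
  exact ⟨x, fun a => y a, l, hx, h0 ▸ hxE, hl, hlen, hhead, hlast, hchain, hnew⟩

theorem proper_chain_structure {V : Type*} [DecidableEq V]
    (H : SimpleHypergraph V) (d t : ℕ) (hpc : UniformPC H d)
    (E E' : Finset V) (hE : E ∈ H.edges) (hE' : E' ∈ H.edges)
    (hdist : edgeDist H E E' = (t : ℕ∞)) (htd : t ≤ d) :
    ∃ (x : Fin d → V) (y : Fin t → V) (l : List (Finset V)),
      Function.Injective x ∧ Finset.univ.image x = E ∧
      IsPIChain H l ∧ l.length = t + 1 ∧ l.head? = some E ∧ l.getLast? = some E' ∧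
      (∀ i : ℕ, i ≤ t → l.getD i ∅ =
        ((Finset.univ.filter fun a : Fin t => (a : ℕ) < i).image y) ∪
        ((Finset.univ.filter fun a : Fin d => i ≤ (a : ℕ)).image x)) ∧
      ∀ i : Fin t, ∀ j : ℕ, j ≤ (i : ℕ) → y i ∉ l.getD j ∅ :=
  proper_chain_structure_general H d t hpc E E' hdist htd
end
end
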